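/- Let G be a finite unicyclic graph obtained from a cycle C by attaching trees at some of its vertices. Assume u and w are two adjacent vertices of the cycle C such that the tree attached at u is a star centered at a vertex v with one of its pendant vertices identified with u (so v is adjacent to u and to some pendant vertices), and the tree attached at w is a star whose center is identified with w (so w is adjacent to its cycle neighbors and to some pendant vertices). If d_G(w) ≥ d_G(v) + 1, then (G;w,w) ≻ (G;v,v). -/

import Mathlib

open SimpleGraph Matrix Polynomial

namespace EstradaBicyclic

variable {V W : Type*}

/-- `Mk G k u v` is the number of walks of length `k` from `u` to `v` in `G`,
computed as the `(u,v)` entry of the `k`-th power of the adjacency matrix. -/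
noncomputable def Mk [Fintype V] (G : SimpleGraph V) (k : ℕ) (u v : V) : ℕ :=
  letI := Classical.decEq V
  letI := Classical.decRel G.Adj
  (G.adjMatrix ℕ ^ k) u v

/-- The Estrada index of a finite graph: the trace of the matrix exponential of the
adjacency matrix. -/
noncomputable def EE [Fintype V] (G : SimpleGraph V) : ℝ :=
  letI := Classical.decEq V
  letI := Classical.decRel G.Adj
  (NormedSpace.exp (G.adjMatrix ℝ)).trace

/-- `(G;u,v) ⪯ (H;s,t)`: for every positive `k`, the number of `k`-walks from `u` to `v`
in `G` is at most the number of `k`-walks from `s` to `t` in `H`. -/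
def MLE [Fintype V] [Fintype W] (G : SimpleGraph V) (u v : V)
    (H : SimpleGraph W) (s t : W) : Prop :=
  ∀ k : ℕ, 0 < k → Mk G k u v ≤ Mk H k s t

/-- `(G;u,v) ≺ (H;s,t)`: `⪯` together with strict inequality for at least one positive `k`. -/
def MLT [Fintype V] [Fintype W] (G : SimpleGraph V) (u v : V)
    (H : SimpleGraph W) (s t : W) : Prop :=
  MLE G u v H s t ∧ ∃ k : ℕ, 0 < k ∧ Mk G k u v < Mk H k s t

/-- The degree of a vertex, via the natural cardinality of its neighbor set. -/
noncomputable def deg (G : SimpleGraph V) (x : V) : ℕ :=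
  (G.neighborSet x).ncard

/-- The coalescence `G(u)∘H(w)` of two vertex-disjoint graphs: identify `u ∈ V(G)`
with `w ∈ V(H)`.  The merged vertex is represented by `Sum.inl u`. -/
def coalescence (G : SimpleGraph V) (H : SimpleGraph W) (u : V) (w : W) :
    SimpleGraph (V ⊕ {x : W // x ≠ w}) where
  Adj x y :=
    match x, y with
    | Sum.inl a, Sum.inl b => G.Adj a b
    | Sum.inl a, Sum.inr b => a = u ∧ H.Adj w b.1
    | Sum.inr a, Sum.inl b => b = u ∧ H.Adj w a.1
    | Sum.inr a, Sum.inr b => H.Adj a.1 b.1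
  symm := by
    constructor
    rintro (a | a) (b | b) h
    · exact h.symm
    · exact h
    · exact h
    · exact h.symm
  loopless := by
    constructor
    rintro (a | a) h
    · exact G.loopless.irrefl a h
    · exact H.loopless.irrefl a.1 h

/-- A connected graph is bicyclic when its number of edges exceeds its number of
vertices by one. -/
def IsBicyclic [Fintype V] (G : SimpleGraph V) : Prop :=
  G.Connected ∧ G.edgeSet.ncard = Fintype.card V + 1

/-- A connected graph is unicyclic when its number of edges equals its number of vertices. -/
def IsUnicyclic [Fintype V] (G : SimpleGraph V) : Prop :=
  G.Connected ∧ G.edgeSet.ncard = Fintype.card V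

/-- Two walks with common endpoints `u`, `v` are internally disjoint. -/
def InternallyDisjoint {G : SimpleGraph V} {u v : V} (P Q : G.Walk u v) : Prop :=
  ∀ x, x ∈ P.support → x ∈ Q.support → x = u ∨ x = v

/-- Numerical constraints for a theta graph `θ(p,q,l)`: all lengths positive and at most
one of them equal to `1`. -/
def ThetaConstraints (p q l : ℕ) : Prop :=
  1 ≤ p ∧ 1 ≤ q ∧ 1 ≤ l ∧ ¬(p = 1 ∧ q = 1) ∧ ¬(p = 1 ∧ l = 1) ∧ ¬(q = 1 ∧ l = 1)

/-- `P₁, P₂, P₃` are three internally disjoint paths of lengths `p, q, l` joining `u` to `v`. -/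
def ThetaPaths {G : SimpleGraph V} {u v : V} (p q l : ℕ)
    (P₁ P₂ P₃ : G.Walk u v) : Prop :=
  P₁.IsPath ∧ P₂.IsPath ∧ P₃.IsPath ∧
  P₁.length = p ∧ P₂.length = q ∧ P₃.length = l ∧
  InternallyDisjoint P₁ P₂ ∧ InternallyDisjoint P₁ P₃ ∧ InternallyDisjoint P₂ P₃

/-- `G` contains `θ(p,q,l)` as a subgraph with branch vertices `u` and `v`. -/
def HasThetaKernel (G : SimpleGraph V) (p q l : ℕ) (u v : V) : Prop :=
  ThetaConstraints p q l ∧ ∃ P₁ P₂ P₃ : G.Walk u v, ThetaPaths p q l P₁ P₂ P₃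

/-- `G` is exactly the theta graph `θ(p,q,l)` with branch vertices `u`, `v`:
the three paths cover all vertices and all edges of `G`. -/
def IsThetaGraph (G : SimpleGraph V) (p q l : ℕ) (u v : V) : Prop :=
  ThetaConstraints p q l ∧ ∃ P₁ P₂ P₃ : G.Walk u v, ThetaPaths p q l P₁ P₂ P₃ ∧
    (∀ x : V, x ∈ P₁.support ∨ x ∈ P₂.support ∨ x ∈ P₃.support) ∧
    (∀ e ∈ G.edgeSet, e ∈ P₁.edges ∨ e ∈ P₂.edges ∨ e ∈ P₃.edges)

/-- Every vertex of `G` outside the three paths is a pendant vertex whose unique neighbor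
lies on the paths, and every edge of `G` between vertices of the paths is an edge of one
of the paths. I.e. `G` is obtained from the union of the three paths by attaching pendant
edges at some of its vertices. -/
def PendantConditions (G : SimpleGraph V) {u v : V} (P₁ P₂ P₃ : G.Walk u v) : Prop :=
  (∀ x : V, x ∉ P₁.support → x ∉ P₂.support → x ∉ P₃.support →
    ∃ y, (y ∈ P₁.support ∨ y ∈ P₂.support ∨ y ∈ P₃.support) ∧
      G.Adj x y ∧ ∀ z, G.Adj x z → z = y) ∧
  (∀ e ∈ G.edgeSet, (∀ x ∈ e, x ∈ P₁.support ∨ x ∈ P₂.support ∨ x ∈ P₃.support) →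
    e ∈ P₁.edges ∨ e ∈ P₂.edges ∨ e ∈ P₃.edges)

/-- `G` is obtained from the theta graph `θ(p,q,l)` (with branch vertices `u`, `v`)
by attaching pendant edges at some of its vertices. -/
def ThetaWithPendants (G : SimpleGraph V) (p q l : ℕ) (u v : V) : Prop :=
  ThetaConstraints p q l ∧ ∃ P₁ P₂ P₃ : G.Walk u v,
    ThetaPaths p q l P₁ P₂ P₃ ∧ PendantConditions G P₁ P₂ P₃

/-- Numerical constraints for an infinity graph `∞(p,q,l)`. -/
def InftyConstraints (p q l : ℕ) : Prop := 3 ≤ p ∧ 3 ≤ q ∧ 1 ≤ l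

/-- `c₁`, `c₂`, `P` form an `∞(p,q,l)`-configuration: cycles of lengths `p` and `q`
through `a` and `b` respectively, joined by a path of length `l-1` from `a` to `b`,
with the correct disjointness. -/
def InftyPaths {G : SimpleGraph V} {a b : V} (p q l : ℕ)
    (c₁ : G.Walk a a) (c₂ : G.Walk b b) (P : G.Walk a b) : Prop :=
  c₁.IsCycle ∧ c₂.IsCycle ∧ P.IsPath ∧
  c₁.length = p ∧ c₂.length = q ∧ P.length = l - 1 ∧
  (∀ x, x ∈ c₁.support → x ∈ c₂.support → x = a ∧ x = b) ∧
  (∀ x, x ∈ c₁.support → x ∈ P.support → x = a) ∧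
  (∀ x, x ∈ c₂.support → x ∈ P.support → x = b)

/-- `G` contains `∞(p,q,l)` as a subgraph, with cycle base vertices `a` and `b`. -/
def HasInftyKernel (G : SimpleGraph V) (p q l : ℕ) (a b : V) : Prop :=
  InftyConstraints p q l ∧ ∃ (c₁ : G.Walk a a) (c₂ : G.Walk b b) (P : G.Walk a b),
    InftyPaths p q l c₁ c₂ P

/-- `G` is obtained from the infinity graph `∞(p,q,l)` by attaching pendant edges at
some of its vertices. -/
def InftyWithPendants (G : SimpleGraph V) (p q l : ℕ) (a b : V) : Prop :=
  InftyConstraints p q l ∧ ∃ (c₁ : G.Walk a a) (c₂ : G.Walk b b) (P : G.Walk a b),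
    InftyPaths p q l c₁ c₂ P ∧
    (∀ x : V, x ∉ c₁.support → x ∉ c₂.support → x ∉ P.support →
      ∃ y, (y ∈ c₁.support ∨ y ∈ c₂.support ∨ y ∈ P.support) ∧
        G.Adj x y ∧ ∀ z, G.Adj x z → z = y) ∧
    (∀ e ∈ G.edgeSet, (∀ x ∈ e, x ∈ c₁.support ∨ x ∈ c₂.support ∨ x ∈ P.support) →
      e ∈ c₁.edges ∨ e ∈ c₂.edges ∨ e ∈ P.edges)

/-- Membership in `𝒢_∞(n;p,q)`: bicyclic graphs of order `n` whose kernel is an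
`∞`-graph with cycle lengths `p` and `q`. -/
def MemGInfty [Fintype V] (n p q : ℕ) (G : SimpleGraph V) : Prop :=
  Fintype.card V = n ∧ IsBicyclic G ∧ ∃ (l : ℕ) (a b : V), HasInftyKernel G p q l a b

/-- Membership in `𝒢_θ(n;p,q)`: bicyclic graphs of order `n` whose kernel is a
`θ`-graph `θ(p',q',l')` with `p' ≥ q' ≥ l'`, `p' + l' = p` and `q' + l' = q`. -/
def MemGTheta [Fintype V] (n p q : ℕ) (G : SimpleGraph V) : Prop :=
  Fintype.card V = n ∧ IsBicyclic G ∧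
    ∃ (p' q' l' : ℕ) (u v : V), l' ≤ q' ∧ q' ≤ p' ∧ p' + l' = p ∧ q' + l' = q ∧
      HasThetaKernel G p' q' l' u v

/-- `G` is the graph `𝐆₁`: obtained from `θ(2,2,1)` by attaching pendant edges at the
branch vertex `u` (a vertex of degree 3 of the theta graph). -/
def IsG1 [Fintype V] (G : SimpleGraph V) : Prop :=
  ∃ (u v : V) (P₁ P₂ P₃ : G.Walk u v), ThetaPaths 2 2 1 P₁ P₂ P₃ ∧
    (∀ x : V, x ∉ P₁.support → x ∉ P₂.support → x ∉ P₃.support →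
      G.Adj x u ∧ ∀ z, G.Adj x z → z = u) ∧
    (∀ e ∈ G.edgeSet, (∀ x ∈ e, x ∈ P₁.support ∨ x ∈ P₂.support ∨ x ∈ P₃.support) →
      e ∈ P₁.edges ∨ e ∈ P₂.edges ∨ e ∈ P₃.edges)

/-- `G` is the graph `𝐆₂`: obtained from `θ(2,2,2)` by attaching pendant edges at the
branch vertex `u` (a vertex of degree 3 of the theta graph). -/
def IsG2 [Fintype V] (G : SimpleGraph V) : Prop :=
  ∃ (u v : V) (P₁ P₂ P₃ : G.Walk u v), ThetaPaths 2 2 2 P₁ P₂ P₃ ∧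
    (∀ x : V, x ∉ P₁.support → x ∉ P₂.support → x ∉ P₃.support →
      G.Adj x u ∧ ∀ z, G.Adj x z → z = u) ∧
    (∀ e ∈ G.edgeSet, (∀ x ∈ e, x ∈ P₁.support ∨ x ∈ P₂.support ∨ x ∈ P₃.support) →
      e ∈ P₁.edges ∨ e ∈ P₂.edges ∨ e ∈ P₃.edges)

/-- The largest adjacency eigenvalue of a finite graph. -/
noncomputable def lambda1 [Fintype V] (G : SimpleGraph V) : ℝ :=
  letI := Classical.decEq V
  letI := Classical.decRel G.Adj
  have h : (G.adjMatrix ℝ).IsHermitian := by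
    rw [Matrix.IsHermitian, Matrix.conjTranspose_eq_transpose_of_trivial]
    exact G.isSymm_adjMatrix
  ⨆ i, h.eigenvalues i

/-- The characteristic polynomial of the adjacency matrix of a finite graph. -/
noncomputable def charPoly [Fintype V] (G : SimpleGraph V) : Polynomial ℝ :=
  letI := Classical.decEq V
  letI := Classical.decRel G.Adj
  (G.adjMatrix ℝ).charpoly

lemma Mk_eq [Fintype V] (G : SimpleGraph V) [DecidableEq V] [DecidableRel G.Adj]
    (k : ℕ) (x z : V) : Mk G k x z = (G.adjMatrix ℕ ^ k) x z := by
  unfold Mk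
  congr!

lemma Mk_symm [Fintype V] (G : SimpleGraph V) (k : ℕ) (x z : V) :
    Mk G k x z = Mk G k z x := by
  classical
  rw [Mk_eq, Mk_eq]
  have h := (isSymm_adjMatrix (α := ℕ) (G := G)).pow k
  conv_lhs => rw [← h]
  rfl

lemma Mk_succ [Fintype V] (G : SimpleGraph V) [DecidableEq V] [DecidableRel G.Adj]
    (k : ℕ) (x z : V) :
    Mk G (k + 1) x z = ∑ y ∈ G.neighborFinset z, Mk G k x y := by
  simp only [Mk_eq, pow_succ, mul_adjMatrix_apply]

lemma Mk_zero [Fintype V] (G : SimpleGraph V) [DecidableEq V] [DecidableRel G.Adj]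
    (x z : V) : Mk G 0 x z = if x = z then 1 else 0 := by
  rw [Mk_eq, pow_zero, Matrix.one_apply]

lemma Mk_two [Fintype V] (G : SimpleGraph V) [DecidableEq V] [DecidableRel G.Adj]
    (x : V) : Mk G 2 x x = G.degree x := by
  rw [Mk_succ]
  have h : ∀ y ∈ G.neighborFinset x, Mk G 1 x y = 1 := by
    intro y hy
    rw [Mk_eq, pow_one, adjMatrix_apply, if_pos ((SimpleGraph.mem_neighborFinset _ _ _).mp hy)]
  rw [Finset.sum_congr rfl h, Finset.sum_const, smul_eq_mul, mul_one, SimpleGraph.degree]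

lemma sum_le_sum_inj [DecidableEq V] (s t : Finset V) (f g : V → ℕ) (ρ : V → V)
    (hmap : ∀ y ∈ s, ρ y ∈ t) (hinj : Set.InjOn ρ s) (hle : ∀ y ∈ s, f y ≤ g (ρ y)) :
    ∑ y ∈ s, f y ≤ ∑ y ∈ t, g y :=
  calc ∑ y ∈ s, f y ≤ ∑ y ∈ s, g (ρ y) := Finset.sum_le_sum hle
    _ = ∑ y ∈ s.image ρ, g y := (Finset.sum_image fun a ha b hb h => hinj ha hb h).symm
    _ ≤ ∑ y ∈ t, g y := Finset.sum_le_sum_of_subset (Finset.image_subset_iff.2 hmap)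


lemma key [Fintype V] [DecidableEq V] (G : SimpleGraph V) [DecidableRel G.Adj]
    (u v w : V) (hne : v ≠ w)
    (huv : G.Adj u v) (huw : G.Adj u w) (hvw : ¬ G.Adj v w)
    (π : V → V) (hinv : Function.Involutive π) (hπv : π v = w) (hπu : π u = u)
    (hPQ : ∀ p, G.Adj v p → p ≠ u → G.Adj w (π p) ∧ (∀ y, G.Adj (π p) y → y = w))
    (hPpend : ∀ p, G.Adj v p → p ≠ u → (∀ y, G.Adj p y → y = v))
    (hfix : ∀ z, z ≠ v → z ≠ w → ¬(G.Adj v z ∧ z ≠ u) → ¬(G.Adj v (π z) ∧ π z ≠ u) →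
      π z = z) :
    ∀ k, (∀ z, Mk G k v z ≤ Mk G k w (π z)) ∧ Mk G k v w ≤ Mk G k w w ∧
      (∀ q, G.Adj w q → (∀ y, G.Adj q y → y = w) → Mk G k v q ≤ Mk G k w q) := by
  have hπw : π w = v := by rw [← hπv]; exact hinv v
  have huv' : u ≠ v := huv.ne
  have huw' : u ≠ w := huw.ne
  intro k
  induction k with
  | zero =>
    refine ⟨?_, ?_, ?_⟩
    · intro z
      rw [Mk_zero, Mk_zero]
      by_cases hz : v = z
      · subst hz; rw [if_pos rfl, hπv, if_pos rfl]
      · rw [if_neg hz]; exact Nat.zero_le _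
    · rw [Mk_zero, if_neg hne]; exact Nat.zero_le _
    · intro q hq _
      rw [Mk_zero, if_neg, Mk_zero]
      · exact Nat.zero_le _
      · rintro rfl; exact hvw hq.symm
  | succ k ih =>
    obtain ⟨A, B, C⟩ := ih
    -- helper: for z with π z = z-type conditions, A gives Mk k v z ≤ Mk k w z
    have hAfix : ∀ y, y ≠ v → y ≠ w → ¬(G.Adj v y ∧ y ≠ u) → ¬(G.Adj v (π y) ∧ π y ≠ u) →
        Mk G k v y ≤ Mk G k w y := by
      intro y h1 h2 h3 h4
      have := A y
      rwa [hfix y h1 h2 h3 h4] at this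
    -- if π y is a v-pendant then y is a w-pendant
    have hQ' : ∀ y, G.Adj v (π y) → π y ≠ u → (G.Adj w y ∧ ∀ t, G.Adj y t → t = w) := by
      intro y h1 h2
      have := hPQ (π y) h1 h2
      rwa [hinv y] at this
    refine ⟨?_, ?_, ?_⟩
    · intro z
      by_cases hzw : z = w
      · rw [hzw, hπw, Mk_symm]
      rw [Mk_succ, Mk_succ]
      by_cases hzv : z = v
      · rw [hzv, hπv]
        refine sum_le_sum_inj _ _ _ _ π ?_ (hinv.injective.injOn) (fun y _ => A y)
        intro y hy
        have hy' : G.Adj v y := (G.mem_neighborFinset _ _).mp hy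
        by_cases hyu : y = u
        · rw [hyu, hπu]; exact (G.mem_neighborFinset _ _).mpr huw.symm
        · exact (G.mem_neighborFinset _ _).mpr (hPQ y hy' hyu).1
      by_cases hzu : z = u
      · rw [hzu, hπu]
        refine sum_le_sum_inj _ _ _ _ π ?_ (hinv.injective.injOn) (fun y _ => A y)
        intro y hy
        have hy' : G.Adj u y := (G.mem_neighborFinset _ _).mp hy
        by_cases h1 : y = v
        · rw [h1, hπv]; exact (G.mem_neighborFinset _ _).mpr huw
        by_cases h2 : y = w
        · rw [h2, hπw]; exact (G.mem_neighborFinset _ _).mpr huv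
        by_cases h3 : G.Adj v y ∧ y ≠ u
        · exact absurd (hPpend y h3.1 h3.2 u hy'.symm) huv'
        by_cases h4 : G.Adj v (π y) ∧ π y ≠ u
        · exact absurd ((hQ' y h4.1 h4.2).2 u hy'.symm) huw'
        · rw [hfix y h1 h2 h3 h4]; exact hy
      by_cases hzP : G.Adj v z ∧ z ≠ u
      · -- z is a v-pendant
        refine sum_le_sum_inj _ _ _ _ π ?_ (hinv.injective.injOn) (fun y _ => A y)
        intro y hy
        have hy' : G.Adj z y := (G.mem_neighborFinset _ _).mp hy
        have : y = v := hPpend z hzP.1 hzP.2 y hy'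
        rw [this, hπv]
        exact (G.mem_neighborFinset _ _).mpr (hPQ z hzP.1 hzP.2).1.symm
      by_cases hzQ : G.Adj v (π z) ∧ π z ≠ u
      · -- z is a paired w-pendant
        obtain ⟨hwz, hzpend⟩ := hQ' z hzQ.1 hzQ.2
        refine sum_le_sum_inj _ _ _ _ π ?_ (hinv.injective.injOn) (fun y _ => A y)
        intro y hy
        have hy' : G.Adj z y := (G.mem_neighborFinset _ _).mp hy
        have : y = w := hzpend y hy'
        rw [this, hπw]
        exact (G.mem_neighborFinset _ _).mpr hzQ.1.symm
      · -- generic fixed z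
        rw [hfix z hzv hzw hzP hzQ]
        refine Finset.sum_le_sum ?_
        intro y hy
        have hy' : G.Adj z y := (G.mem_neighborFinset _ _).mp hy
        by_cases hyw : y = w
        · rw [hyw]; exact B
        have hyv : y ≠ v := by
          rintro rfl
          exact hzP ⟨hy'.symm, hzu⟩
        have h3 : ¬(G.Adj v y ∧ y ≠ u) := by
          rintro ⟨h, hne'⟩
          exact hzv (hPpend y h hne' z hy'.symm)
        have h4 : ¬(G.Adj v (π y) ∧ π y ≠ u) := by
          rintro ⟨h, hne'⟩
          exact hzw ((hQ' y h hne').2 z hy'.symm)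
        exact hAfix y hyv hyw h3 h4
    · -- B (k+1)
      rw [Mk_succ, Mk_succ]
      refine Finset.sum_le_sum ?_
      intro y hy
      have hy' : G.Adj w y := (G.mem_neighborFinset _ _).mp hy
      by_cases hyu : y = u
      · rw [hyu]; have := A u; rwa [hπu] at this
      by_cases hyQ : ∀ t, G.Adj y t → t = w
      · exact C y hy' hyQ
      have hyv : y ≠ v := by rintro rfl; exact hvw hy'.symm
      have hyw : y ≠ w := hy'.ne'
      have h3 : ¬(G.Adj v y ∧ y ≠ u) := by
        rintro ⟨h, hne'⟩
        exact hne (hPpend y h hne' w hy'.symm).symm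
      have h4 : ¬(G.Adj v (π y) ∧ π y ≠ u) := by
        rintro ⟨h, hne'⟩
        exact hyQ (hQ' y h hne').2
      exact hAfix y hyv hyw h3 h4
    · -- C (k+1)
      intro q hwq hqpend
      rw [Mk_succ, Mk_succ]
      have hsub : G.neighborFinset q ⊆ {w} := by
        intro y hy
        rw [Finset.mem_singleton]
        exact hqpend y ((G.mem_neighborFinset _ _).mp hy)
      have hmem : w ∈ G.neighborFinset q := (G.mem_neighborFinset _ _).mpr hwq.symm
      calc ∑ y ∈ G.neighborFinset q, Mk G k v y
          ≤ ∑ y ∈ ({w} : Finset V), Mk G k v y := Finset.sum_le_sum_of_subset hsub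
        _ = Mk G k v w := Finset.sum_singleton _ _
        _ ≤ Mk G k w w := B
        _ ≤ ∑ y ∈ G.neighborFinset q, Mk G k w y :=
            Finset.single_le_sum (fun i _ => Nat.zero_le _) hmem
lemma end_nbr_unique {G : SimpleGraph V} {x y : V} (p : G.Walk x y) (hp : p.IsPath) :
    ∀ z z', s(y, z) ∈ p.edges → s(y, z') ∈ p.edges → z = z' := by
  induction p with
  | nil => simp
  | @cons a b c h p ih =>
    intro z z' hz hz'
    rw [Walk.cons_isPath_iff] at hp
    have hac : a ≠ c := by
      rintro rfl
      exact hp.2 p.end_mem_support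
    rw [Walk.edges_cons, List.mem_cons] at hz hz'
    rcases hz with hz | hz
    · rw [Sym2.eq_iff] at hz
      rcases hz with ⟨h1, h2⟩ | ⟨h1, h2⟩
      · exact absurd h1.symm hac
      · -- c = b, z = a : p is a walk from c to c
        rcases hz' with hz' | hz'
        · rw [Sym2.eq_iff] at hz'
          rcases hz' with ⟨h1', h2'⟩ | ⟨h1', h2'⟩
          · exact absurd h1'.symm hac
          · rw [h2, h2']
        · exfalso
          subst h1
          rw [Walk.isPath_iff_eq_nil] at hp
          rw [hp.1] at hz'
          simp at hz'
    · rcases hz' with hz' | hz'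
      · rw [Sym2.eq_iff] at hz'
        rcases hz' with ⟨h1', h2'⟩ | ⟨h1', h2'⟩
        · exact absurd h1'.symm hac
        · exfalso
          subst h1'
          rw [Walk.isPath_iff_eq_nil] at hp
          rw [hp.1] at hz
          simp at hz
      · exact ih hp.1 z z' hz hz'

lemma card_le_edge_card_add_one [Fintype V] [DecidableEq V]
    (H : SimpleGraph V) [DecidableRel H.Adj] (hconn : H.Connected) :
    Fintype.card V ≤ H.edgeFinset.card + 1 := by
  obtain ⟨root⟩ := hconn.nonempty
  have hex : ∀ a : V, ∃ p : H.Walk a root, p.length = H.dist a root :=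
    fun a => hconn.exists_walk_length_eq_dist a root
  choose f hf using hex
  have hnn : ∀ a : V, a ≠ root → ¬ (f a).Nil := by
    intro a ha
    rw [Walk.not_nil_iff_lt_length, hf]
    exact hconn.pos_dist_of_ne ha
  set φ : V → Sym2 V := fun a => s(a, (f a).getVert 1) with hφ
  have hadj : ∀ a, a ≠ root → H.Adj a ((f a).getVert 1) :=
    fun a ha => Walk.adj_snd (hnn a ha)
  have hdist : ∀ a, a ≠ root → H.dist ((f a).getVert 1) root < H.dist a root := by
    intro a ha
    have h1 : ((f a).tail).length + 1 = H.dist a root := by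
      rw [Walk.length_tail_add_one (hnn a ha), hf]
    have h2 := SimpleGraph.dist_le ((f a).tail)
    have h3 : H.dist ((f a).getVert 1) root = H.dist (f a).snd root := rfl
    omega
  have hcard : (Finset.univ.erase root).card ≤ H.edgeFinset.card := by
    apply Finset.card_le_card_of_injOn φ
    · intro a ha
      rw [Finset.mem_coe, Finset.mem_erase] at ha
      rw [Finset.mem_coe, SimpleGraph.mem_edgeFinset, SimpleGraph.mem_edgeSet]
      exact hadj a ha.1
    · intro a ha b hb hab
      rw [Finset.coe_erase, Set.mem_diff] at ha hb
      simp only [hφ, Sym2.eq_iff] at hab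
      rcases hab with ⟨h1, _⟩ | ⟨h1, h2⟩
      · exact h1
      · exfalso
        have ha' : a ≠ root := by simpa using ha.2
        have hb' : b ≠ root := by simpa using hb.2
        have d1 := hdist a ha'
        have d2 := hdist b hb'
        rw [h2] at d1
        rw [← h1] at d2
        omega
  rw [Finset.card_erase_of_mem (Finset.mem_univ root), Finset.card_univ] at hcard
  omega
lemma mem_support_rotate [DecidableEq V] {G : SimpleGraph V} {a : V} (c : G.Walk a a)
    (hnn : ¬ c.Nil) {w : V} (hw : w ∈ c.support) {z : V} (hz : z ∈ c.support) :
    z ∈ (c.rotate w hw).support := by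
  have h1 : z ∈ c.support.tail := by
    by_cases hza : z = a
    · obtain ⟨b, h, q, hq⟩ := Walk.not_nil_iff.mp hnn
      rw [hq, Walk.support_cons, List.tail_cons]
      rw [hza]
      exact q.end_mem_support
    · rcases (Walk.mem_support_iff _).mp hz with h | h
      · exact absurd h hza
      · exact h
  exact List.mem_of_mem_tail ((c.support_rotate w hw).mem_iff.mpr h1)

lemma chord_mem_cycle_edges [Fintype V] [DecidableEq V] (G : SimpleGraph V)
    [DecidableRel G.Adj] (hconn : G.Connected) (hcount : G.edgeSet.ncard = Fintype.card V)
    {a : V} {c : G.Walk a a} (hc : c.IsCycle) {w z : V} (hwz : G.Adj w z)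
    (hwc : w ∈ c.support) (hzc : z ∈ c.support) : s(w, z) ∈ c.edges := by
  classical
  by_contra hne
  have hc' : (c.rotate w hwc).IsCycle := hc.rotate hwc
  set c' := c.rotate w hwc with hcdef
  have hnn : ¬ c'.Nil := hc'.not_nil
  obtain ⟨x, hwx, q, hq⟩ := Walk.not_nil_iff.mp hnn
  have hq2 := (Walk.cons_isCycle_iff q hwx).mp (hq ▸ hc')
  have hchordc' : s(w, z) ∉ c'.edges := fun h => hne ((c.rotate_edges w hwc).mem_iff.mp h)
  have hzc' : z ∈ c'.support := mem_support_rotate c hc.not_nil hwc hzc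
  have hzq : z ∈ q.support := by
    rw [hq, Walk.support_cons, List.mem_cons] at hzc'
    rcases hzc' with h | h
    · exact absurd h hwz.ne'
    · exact h
  have hchordq : s(w, z) ∉ q.edges := fun h =>
    hchordc' (by rw [hq, Walk.edges_cons]; exact List.mem_cons_of_mem _ h)
  set D : Set (Sym2 V) := {s(w, x), s(w, z)} with hD
  have hqD : ∀ e ∈ q.edges, e ∉ D := by
    intro e he hmem
    rcases hmem with h | h
    · rw [h] at he; exact hq2.2 he
    · rw [h] at he; exact hchordq he
  have hdsub := q.edges_dropUntil_subset hzq
  have hdD : ∀ e ∈ (q.dropUntil z hzq).edges, e ∉ D := fun e he => hqD e (hdsub he)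
  have hlift : ∀ ⦃s t : V⦄, G.Adj s t → (G.deleteEdges D).Reachable s t := by
    intro s t hst
    by_cases h1 : s(s, t) = s(w, x)
    · have hr : (G.deleteEdges D).Reachable x w := Walk.reachable (q.toDeleteEdges D hqD)
      rw [Sym2.eq_iff] at h1
      rcases h1 with ⟨h3, h4⟩ | ⟨h3, h4⟩
      · rw [h3, h4]; exact hr.symm
      · rw [h3, h4]; exact hr
    by_cases h2 : s(s, t) = s(w, z)
    · have hr : (G.deleteEdges D).Reachable z w :=
        Walk.reachable ((q.dropUntil z hzq).toDeleteEdges D hdD)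
      rw [Sym2.eq_iff] at h2
      rcases h2 with ⟨h3, h4⟩ | ⟨h3, h4⟩
      · rw [h3, h4]; exact hr.symm
      · rw [h3, h4]; exact hr
    · refine SimpleGraph.Adj.reachable ?_
      rw [SimpleGraph.deleteEdges_adj]
      refine ⟨hst, ?_⟩
      intro hmem
      rcases hmem with h | h
      · exact h1 h
      · exact h2 h
  have haux : ∀ {s t : V} (_ : G.Walk s t), (G.deleteEdges D).Reachable s t := by
    intro s t W
    induction W with
    | nil => exact Reachable.refl _
    | cons h _ ih => exact (hlift h).trans ih
  haveI : Nonempty V := hconn.nonempty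
  have hconn₂ : (G.deleteEdges D).Connected := by
    constructor
    intro s t
    obtain ⟨W⟩ := hconn s t
    exact haux W
  have hwx' : s(w, x) ∈ G.edgeSet := hwx
  have hwz' : s(w, z) ∈ G.edgeSet := hwz
  have hxz : s(w, x) ≠ s(w, z) := by
    intro h
    apply hchordc'
    rw [← h, hq, Walk.edges_cons]
    exact List.mem_cons_self
  have hDsub : D ⊆ G.edgeSet := by
    intro e he
    rcases he with h | h
    · rw [h]; exact hwx'
    · rw [h]; exact hwz'
  have hcard2 : (G.deleteEdges D).edgeSet.ncard = Fintype.card V - 2 := by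
    rw [SimpleGraph.edgeSet_deleteEdges, Set.ncard_diff hDsub, hcount, hD, Set.ncard_pair hxz]
  have hle := card_le_edge_card_add_one (G.deleteEdges D) hconn₂
  have hcardeq : (G.deleteEdges D).edgeFinset.card = (G.deleteEdges D).edgeSet.ncard := by
    rw [Set.ncard_eq_toFinset_card']
    congr 1
  have h2 : 1 < Fintype.card V := Fintype.one_lt_card_iff_nontrivial.mpr ⟨⟨w, z, hwz.ne⟩⟩
  omega

/-- Corollary 2.5 (i).  In a unicyclic graph consisting of a cycle with
trees attached, where the tree at `u` is a star centered at `v` with a pendant vertex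
identified with `u`, and the tree at `w` is a star centered at `w`, if
`d_G(w) ≥ d_G(v) + 1` then `(G;w,w) ≻ (G;v,v)`. -/
theorem statement_5 {V : Type*} [Fintype V] (G : SimpleGraph V)
    (hG : IsUnicyclic G)
    (a : V) (c : G.Walk a a) (hc : c.IsCycle)
    (u w v : V) (hu : u ∈ c.support) (hw : w ∈ c.support) (huw : G.Adj u w)
    (hv : v ∉ c.support) (huv : G.Adj u v)
    (hustar : ∀ x, G.Adj u x → x ∈ c.support ∨ x = v)
    (hvstar : ∀ x, G.Adj v x → x = u ∨ deg G x = 1)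
    (hwstar : ∀ x, G.Adj w x → x ∈ c.support ∨ deg G x = 1)
    (hdeg : deg G v + 1 ≤ deg G w) :
    MLT G v v G w w := by
  classical
  have hu_ne_v : u ≠ v := huv.ne
  have hu_ne_w : u ≠ w := huw.ne
  have hv_ne_w : v ≠ w := fun h => hv (h ▸ hw)
  have hdeg_eq : ∀ x : V, deg G x = G.degree x := by
    intro x
    rw [deg, Set.ncard_eq_toFinset_card']
    rfl
  have hpend : ∀ {x y : V}, G.Adj x y → deg G x = 1 → ∀ t, G.Adj x t → t = y := by
    intro x y hxy hx t ht
    obtain ⟨b, hb⟩ := Set.ncard_eq_one.mp (hx : (G.neighborSet x).ncard = 1)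
    have h1 : y ∈ G.neighborSet x := hxy
    have h2 : t ∈ G.neighborSet x := ht
    rw [hb, Set.mem_singleton_iff] at h1 h2
    rw [h2, h1]
  have hvw : ¬ G.Adj v w := by
    intro h
    rcases hvstar w h with h1 | h1
    · exact hu_ne_w h1.symm
    · exact hu_ne_v (hpend h.symm h1 u huw.symm)
  have hPpend : ∀ p, G.Adj v p → p ≠ u → (∀ y, G.Adj p y → y = v) := by
    intro p h1 h2 y hy
    rcases hvstar p h1 with h3 | h3
    · exact absurd h3 h2
    · exact hpend h1.symm h3 y hy
  have hCN : ∀ z, G.Adj w z → z ∈ c.support → s(w, z) ∈ (c.rotate w hw).edges := by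
    intro z h1 h2
    exact (c.rotate_edges w hw).mem_iff.mpr (chord_mem_cycle_edges G hG.1 hG.2 hc h1 hw h2)
  have hc' : (c.rotate w hw).IsCycle := hc.rotate hw
  obtain ⟨x, hwx, q, hq⟩ := Walk.not_nil_iff.mp hc'.not_nil
  have hq2 := (Walk.cons_isCycle_iff q hwx).mp (hq ▸ hc')
  set y₀ : V := if h : ∃ t, s(w, t) ∈ q.edges then h.choose else x with hy₀
  have htwo : ∀ z, G.Adj w z → z ∈ c.support → z = x ∨ z = y₀ := by
    intro z h1 h2
    have h3 := hCN z h1 h2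
    rw [hq, Walk.edges_cons, List.mem_cons] at h3
    rcases h3 with h3 | h3
    · left
      rw [Sym2.eq_iff] at h3
      rcases h3 with ⟨_, h4⟩ | ⟨h4, h5⟩
      · exact h4
      · exact absurd h4 hwx.ne
    · right
      have hex : ∃ t, s(w, t) ∈ q.edges := ⟨z, h3⟩
      rw [hy₀, dif_pos hex]
      exact end_nbr_unique q hq2.1 z hex.choose h3 hex.choose_spec
  set Pfin : Finset V := (G.neighborFinset v).erase u with hPfin
  set Qfin : Finset V := (G.neighborFinset w).filter (fun t => deg G t = 1) with hQfin
  have hmemP : ∀ t, t ∈ Pfin ↔ (G.Adj v t ∧ t ≠ u) := by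
    intro t
    rw [hPfin, Finset.mem_erase, SimpleGraph.mem_neighborFinset]
    tauto
  have hmemQ : ∀ t, t ∈ Qfin ↔ (G.Adj w t ∧ deg G t = 1) := by
    intro t; rw [hQfin, Finset.mem_filter, SimpleGraph.mem_neighborFinset]
  have hQpend : ∀ t ∈ Qfin, ∀ y, G.Adj t y → y = w := by
    intro t ht
    rw [hmemQ] at ht
    exact hpend ht.1.symm ht.2
  have hvP : v ∉ Pfin := fun h => G.irrefl ((hmemP v).mp h).1
  have hwP : w ∉ Pfin := fun h => hvw ((hmemP w).mp h).1
  have hvQ : v ∉ Qfin := fun h => hvw (((hmemQ v).mp h).1).symm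
  have hwQ : w ∉ Qfin := fun h => G.irrefl ((hmemQ w).mp h).1
  have huP : u ∉ Pfin := fun h => ((hmemP u).mp h).2 rfl
  have huQ : u ∉ Qfin := by
    intro h
    exact hv_ne_w (hpend huv ((hmemQ u).mp h).2 w huw).symm
  have hPQdisj : ∀ t, t ∈ Pfin → t ∈ Qfin → False := by
    intro t h1 h2
    exact hv_ne_w (hQpend t h2 v ((hmemP t).mp h1).1.symm)
  have hPcard : Pfin.card = G.degree v - 1 := by
    rw [hPfin, Finset.card_erase_of_mem ((SimpleGraph.mem_neighborFinset _ _ _).mpr huv.symm)]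
    rfl
  have hsub : G.neighborFinset w ⊆ Qfin ∪ {x, y₀} := by
    intro t ht
    have h1 : G.Adj w t := (SimpleGraph.mem_neighborFinset _ _ _).mp ht
    rcases hwstar t h1 with h2 | h2
    · refine Finset.mem_union_right _ ?_
      rcases htwo t h1 h2 with h3 | h3
      · rw [h3]; exact Finset.mem_insert_self _ _
      · rw [h3]; exact Finset.mem_insert_of_mem (Finset.mem_singleton_self _)
    · exact Finset.mem_union_left _ ((hmemQ t).mpr ⟨h1, h2⟩)
  have hQcard : G.degree w ≤ Qfin.card + 2 := by
    calc G.degree w = (G.neighborFinset w).card := rfl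
      _ ≤ (Qfin ∪ {x, y₀}).card := Finset.card_le_card hsub
      _ ≤ Qfin.card + ({x, y₀} : Finset V).card := Finset.card_union_le _ _
      _ ≤ Qfin.card + 2 := by
          have := Finset.card_insert_le x ({y₀} : Finset V)
          simp only [Finset.card_singleton] at this
          omega
  have hdegv_pos : 1 ≤ G.degree v := by
    have : u ∈ G.neighborFinset v := (SimpleGraph.mem_neighborFinset _ _ _).mpr huv.symm
    have := Finset.card_pos.mpr ⟨u, this⟩
    exact this
  have hcards : Pfin.card ≤ Qfin.card := by
    have h1 := hdeg
    rw [hdeg_eq, hdeg_eq] at h1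
    omega
  obtain ⟨σ⟩ : Nonempty ({t // t ∈ Pfin} ↪ {t // t ∈ Qfin}) := by
    apply Function.Embedding.nonempty_of_card_le
    rw [Fintype.card_coe, Fintype.card_coe]
    exact hcards
  have hσQ : ∀ p : {s // s ∈ Pfin}, ((σ p : {s // s ∈ Qfin}) : V) ∈ Qfin := fun p => (σ p).2
  set π : V → V := fun t =>
    if t = v then w else if t = w then v
    else if h : t ∈ Pfin then ((σ ⟨t, h⟩ : {s // s ∈ Qfin}) : V)
    else if h : ∃ p : {s // s ∈ Pfin}, ((σ p : {s // s ∈ Qfin}) : V) = t then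
      ((h.choose : {s // s ∈ Pfin}) : V)
    else t with hπ
  have hπv : π v = w := by rw [hπ]; simp
  have hπw : π w = v := by
    rw [hπ]
    simp [Ne.symm hv_ne_w]
  have hπP : ∀ t (h : t ∈ Pfin), π t = ((σ ⟨t, h⟩ : {s // s ∈ Qfin}) : V) := by
    intro t h
    have h1 : t ≠ v := fun e => hvP (e ▸ h)
    have h2 : t ≠ w := fun e => hwP (e ▸ h)
    rw [hπ]
    simp only [if_neg h1, if_neg h2, dif_pos h]
  have hπσ : ∀ p : {s // s ∈ Pfin}, π ((σ p : {s // s ∈ Qfin}) : V) = (p : V) := by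
    intro p
    have htQ : ((σ p : {s // s ∈ Qfin}) : V) ∈ Qfin := hσQ p
    have h1 : ((σ p : {s // s ∈ Qfin}) : V) ≠ v := fun e => hvQ (e ▸ htQ)
    have h2 : ((σ p : {s // s ∈ Qfin}) : V) ≠ w := fun e => hwQ (e ▸ htQ)
    have h3 : ((σ p : {s // s ∈ Qfin}) : V) ∉ Pfin := fun h => hPQdisj _ h htQ
    have hex : ∃ p' : {s // s ∈ Pfin}, ((σ p' : {s // s ∈ Qfin}) : V)
        = ((σ p : {s // s ∈ Qfin}) : V) := ⟨p, rfl⟩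
    rw [hπ]
    simp only [if_neg h1, if_neg h2, dif_neg h3, dif_pos hex]
    have h4 : σ hex.choose = σ p := Subtype.coe_injective hex.choose_spec
    exact congrArg Subtype.val (σ.injective h4)
  have hπfix : ∀ t, t ≠ v → t ≠ w → t ∉ Pfin →
      (¬ ∃ p : {s // s ∈ Pfin}, ((σ p : {s // s ∈ Qfin}) : V) = t) → π t = t := by
    intro t h1 h2 h3 h4
    rw [hπ]
    simp only [if_neg h1, if_neg h2, dif_neg h3, dif_neg h4]
  have hπu : π u = u :=
    hπfix u hu_ne_v hu_ne_w huP (fun ⟨p, hp⟩ => huQ (hp ▸ hσQ p))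
  have hinv : Function.Involutive π := by
    intro t
    by_cases h1 : t = v
    · rw [h1, hπv, hπw]
    by_cases h2 : t = w
    · rw [h2, hπw, hπv]
    by_cases h3 : t ∈ Pfin
    · rw [hπP t h3]
      have := hπσ ⟨t, h3⟩
      simpa using this
    by_cases h4 : ∃ p : {s // s ∈ Pfin}, ((σ p : {s // s ∈ Qfin}) : V) = t
    · obtain ⟨p, hp⟩ := h4
      rw [← hp, hπσ p, hπP _ p.2]
    · rw [hπfix t h1 h2 h3 h4, hπfix t h1 h2 h3 h4]
  have hPQ : ∀ p, G.Adj v p → p ≠ u → G.Adj w (π p) ∧ (∀ y, G.Adj (π p) y → y = w) := by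
    intro p h1 h2
    have hp : p ∈ Pfin := (hmemP p).mpr ⟨h1, h2⟩
    rw [hπP p hp]
    have hQ := hσQ ⟨p, hp⟩
    exact ⟨((hmemQ _).mp hQ).1, hQpend _ hQ⟩
  have hfix' : ∀ z, z ≠ v → z ≠ w → ¬(G.Adj v z ∧ z ≠ u) →
      ¬(G.Adj v (π z) ∧ π z ≠ u) → π z = z := by
    intro z h1 h2 h3 h4
    have h5 : z ∉ Pfin := fun h => h3 ((hmemP z).mp h)
    refine hπfix z h1 h2 h5 ?_
    rintro ⟨p, hp⟩
    apply h4
    rw [← hp, hπσ p]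
    exact (hmemP _).mp p.2
  have hPpend' : ∀ p, G.Adj v p → p ≠ u → (∀ y, G.Adj p y → y = v) := hPpend
  have hkey := key G u v w hv_ne_w huv huw hvw π hinv hπv hπu hPQ hPpend' hfix'
  constructor
  · intro k hk
    have := (hkey k).1 v
    rwa [hπv] at this
  · refine ⟨2, by norm_num, ?_⟩
    rw [Mk_two, Mk_two]
    have h1 := hdeg
    rw [hdeg_eq, hdeg_eq] at h1
    omega


end EstradaBicyclic
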